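/- Let u and v be two non-minimal nodes in an LR-vine P. If the conditioned sets of u and v are equal (C_u = C_v), then u = v. -/

import Mathlib

/-- The `i`-th associated graph of a graded poset: vertices are the elements of rank `i`,
with `a` and `b` adjacent when they are (distinct, of rank `i` and) covered by a common
element (which then has cover-set `{a, b}`). -/
def coverGraph {P : Type*} [PartialOrder P] (rk : P → ℕ) (i : ℕ) : SimpleGraph P where
  Adj a b := a ≠ b ∧ rk a = i ∧ rk b = i ∧ ∃ v : P, a ⋖ v ∧ b ⋖ v
  symm := ⟨by
    rintro a b ⟨hne, ha, hb, v, h1, h2⟩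
    exact ⟨hne.symm, hb, ha, v, h2, h1⟩⟩
  loopless := ⟨by rintro a ⟨hne, -⟩; exact hne rfl⟩

/-- A vine: a finite graded poset (with rank function `rk`, minimal elements of rank 1)
in which every non-minimal node covers exactly two nodes, any two distinct nodes of the
same rank are covered by at most one common node, and each associated graph is a
forest. -/
structure IsVine {P : Type*} [PartialOrder P] [Finite P] (rk : P → ℕ) : Prop where
  rk_strictMono : ∀ x y : P, x < y → rk x < rk y
  rk_covBy : ∀ x y : P, x ⋖ y → rk y = rk x + 1
  rk_min : ∀ x : P, IsMin x → rk x = 1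
  covers_two : ∀ v : P, ¬ IsMin v → {a : P | a ⋖ v}.ncard = 2
  cover_unique : ∀ a b : P, a ≠ b → rk a = rk b →
    ∀ v w : P, a ⋖ v → b ⋖ v → a ⋖ w → b ⋖ w → v = w
  forest : ∀ i : ℕ, (coverGraph rk i).IsAcyclic

/-- The rank of a graded poset: the largest rank of an element. -/
noncomputable def vineRank {P : Type*} (rk : P → ℕ) : ℕ := sSup (Set.range rk)

/-- The proximity condition: any two distinct nodes of the same rank `≥ 2` that are
covered by a common node themselves cover a common node. -/
def Proximity {P : Type*} [PartialOrder P] (rk : P → ℕ) : Prop :=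
  ∀ a b : P, a ≠ b → rk a = rk b → 2 ≤ rk a →
    (∃ v : P, a ⋖ v ∧ b ⋖ v) → ∃ c : P, c ⋖ a ∧ c ⋖ b

/-- A regular vine (R-vine): a vine whose rank equals its dimension (the number of
minimal elements), whose associated forests (for `1 ≤ i ≤ rank`) are trees, and
which satisfies the proximity condition. -/
structure IsRVine {P : Type*} [PartialOrder P] [Finite P] (rk : P → ℕ)
    extends IsVine rk : Prop where
  rank_eq_dim : vineRank rk = {x : P | IsMin x}.ncard
  tree : ∀ i : ℕ, 1 ≤ i → i ≤ vineRank rk →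
    ((coverGraph rk i).induce {x : P | rk x = i}).Connected
  proximity : Proximity rk

/-- A locally regular vine (LR-vine): a vine all of whose principal ideals
(with the induced order and rank) are R-vines. -/
def IsLRVine {P : Type*} [PartialOrder P] [Finite P] (rk : P → ℕ) : Prop :=
  IsVine rk ∧ ∀ v : P, IsRVine (P := {x : P // x ≤ v}) (fun x => rk x.val)

/-- The complete union of a node: the set of minimal elements below it. -/
def completeUnion {P : Type*} [PartialOrder P] (a : P) : Set P :=
  {x : P | IsMin x ∧ x ≤ a}

/-- The conditioned set of a (non-minimal) node `v`: the minimal elements lying below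
exactly one of the two nodes covered by `v` (the symmetric difference of the complete
unions of the two covered nodes). -/
def conditionedSet {P : Type*} [PartialOrder P] (v : P) : Set P :=
  {m : P | IsMin m ∧ ∃! a : P, a ⋖ v ∧ m ≤ a}

/-!
In an LR-vine every principal ideal is an R-vine, whose rank equals its dimension, so a node `x`
lies above exactly `rk x` minimal elements. Counting then shows that the conditioned set of a
non-minimal node `u` is a pair `{i, j}`, and that no node strictly below `u` lies above both
`i` and `j`.

Now let `C u = C v = {i, j}`. Two distinct nodes `x`, `y` of the same rank below both `u` and
`v` are joined by a path in the rank-`rk x` graph of the ideal of `u`, and by one in that of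
`v`, since these graphs are trees. Both are paths in the same forest, so they coincide, and
their first edge has a single cover, which lies below `u` and `v`. Climbing from `i`, `j` in this
way ends at a node `w ≤ u, v` above `i` and `j`, and then `w = u` and `w = v`.
-/

section

open SimpleGraph
open scoped symmDiff

variable {P : Type*} [PartialOrder P]

lemma le_of_mem_conditionedSet {m v : P} (hm : m ∈ conditionedSet v) : m ≤ v :=
  let ⟨_, _, ⟨hav, hma⟩, _⟩ := hm
  hma.trans hav.le

lemma completeUnion_mono {x y : P} (hxy : x ≤ y) : completeUnion x ⊆ completeUnion y :=
  fun _ ⟨hm, hmx⟩ => ⟨hm, hmx.trans hxy⟩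

lemma conditionedSet_eq_symmDiff {u a b : P} (hab : a ≠ b) (hcov : ∀ c, c ⋖ u ↔ c = a ∨ c = b) :
    conditionedSet u = completeUnion a ∆ completeUnion b := by
  ext m
  simp only [conditionedSet, completeUnion, Set.mem_symmDiff, Set.mem_ofPred_eq, hcov]
  constructor
  · rintro ⟨hm, c, ⟨rfl | rfl, hmc⟩, huniq⟩
    · exact Or.inl ⟨⟨hm, hmc⟩, fun ⟨_, hmb⟩ => hab (huniq b ⟨Or.inr rfl, hmb⟩).symm⟩
    · exact Or.inr ⟨⟨hm, hmc⟩, fun ⟨_, hma⟩ => hab (huniq a ⟨Or.inl rfl, hma⟩)⟩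
  · rintro (⟨⟨hm, hma⟩, hmb⟩ | ⟨⟨hm, hmb⟩, hma⟩)
    · refine ⟨hm, a, ⟨Or.inl rfl, hma⟩, ?_⟩
      rintro c ⟨rfl | rfl, hmc⟩
      exacts [rfl, absurd ⟨hm, hmc⟩ hmb]
    · refine ⟨hm, b, ⟨Or.inr rfl, hmb⟩, ?_⟩
      rintro c ⟨rfl | rfl, hmc⟩
      exacts [absurd ⟨hm, hmc⟩ hma, rfl]

lemma completeUnion_eq_union [Finite P] {u a b : P} (hu : ¬ IsMin u)
    (hcov : ∀ c, c ⋖ u ↔ c = a ∨ c = b) :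
    completeUnion u = completeUnion a ∪ completeUnion b := by
  refine subset_antisymm ?_ (Set.union_subset (completeUnion_mono ((hcov a).2 (Or.inl rfl)).le)
    (completeUnion_mono ((hcov b).2 (Or.inr rfl)).le))
  rintro m ⟨hm, hmu⟩
  obtain ⟨c, hmc, hcu⟩ := exists_le_covBy_of_lt (hmu.lt_of_ne fun h => hu (h ▸ hm))
  rcases (hcov c).1 hcu with rfl | rfl
  exacts [Or.inl ⟨hm, hmc⟩, Or.inr ⟨hm, hmc⟩]

lemma vineRank_subtype_le_eq {rk : P → ℕ} (hrk : Monotone rk) (u : P) :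
    vineRank (fun z : {x : P // x ≤ u} => rk z.val) = rk u :=
  IsGreatest.csSup_eq ⟨⟨⟨u, le_rfl⟩, rfl⟩, by rintro _ ⟨z, rfl⟩; exact hrk z.2⟩

/-- The image of the rank-`ℓ` graph of the principal ideal of `w`. -/
def coverGraphBelow (rk : P → ℕ) (ℓ : ℕ) (w : P) : SimpleGraph P where
  Adj a b := a ≠ b ∧ rk a = ℓ ∧ rk b = ℓ ∧ ∃ p ≤ w, a ⋖ p ∧ b ⋖ p
  symm := ⟨by
    rintro a b ⟨hne, ha, hb, p, hpw, hap, hbp⟩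
    exact ⟨hne.symm, hb, ha, p, hpw, hbp, hap⟩⟩
  loopless := ⟨fun _ h => h.1 rfl⟩

lemma coverGraphBelow_le (rk : P → ℕ) (ℓ : ℕ) (w : P) :
    coverGraphBelow rk ℓ w ≤ coverGraph rk ℓ :=
  fun _ _ ⟨hne, ha, hb, p, _, hap, hbp⟩ => ⟨hne, ha, hb, p, hap, hbp⟩

namespace IsVine

variable [Finite P] {rk : P → ℕ}

lemma strictMono (hV : IsVine rk) : StrictMono rk :=
  fun x y => hV.rk_strictMono x y

lemma one_le_rk (hV : IsVine rk) (x : P) : 1 ≤ rk x := by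
  by_cases hx : IsMin x
  · exact (hV.rk_min x hx).ge
  · obtain ⟨b, hbx⟩ := not_isMin_iff.mp hx
    exact (Nat.zero_le _).trans_lt (hV.strictMono hbx)

lemma exists_covBy_iff (hV : IsVine rk) {u : P} (hu : ¬ IsMin u) :
    ∃ a b : P, a ≠ b ∧ ∀ c, c ⋖ u ↔ c = a ∨ c = b := by
  obtain ⟨a, b, hab, hcov⟩ := Set.ncard_eq_two.mp (hV.covers_two u hu)
  exact ⟨a, b, hab, fun c => Set.ext_iff.mp hcov c⟩

lemma completeUnion_subset_union_conditionedSet (hV : IsVine rk) {u c : P} (hu : ¬ IsMin u)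
    (hcu : c ⋖ u) : completeUnion u ⊆ completeUnion c ∪ conditionedSet u := by
  obtain ⟨a, b, hab, hcov⟩ := hV.exists_covBy_iff hu
  rw [completeUnion_eq_union hu hcov, conditionedSet_eq_symmDiff hab hcov]
  intro m hm
  rcases (hcov c).1 hcu with rfl | rfl <;>
    simp only [Set.mem_union, Set.mem_symmDiff] at hm ⊢ <;> tauto

end IsVine

namespace IsLRVine

variable [Finite P] {rk : P → ℕ}

lemma ncard_completeUnion (h : IsLRVine rk) (u : P) : (completeUnion u).ncard = rk u := by
  have hdim := (h.2 u).rank_eq_dim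
  rw [vineRank_subtype_le_eq h.1.strictMono.monotone] at hdim
  have himage : completeUnion u = Subtype.val '' {x : {z : P // z ≤ u} | IsMin x} := by
    ext m
    constructor
    · rintro ⟨hm, hmu⟩
      exact ⟨⟨m, hmu⟩, (Set.initialSegIic u).isMin_apply_iff.mp hm, rfl⟩
    · rintro ⟨z, hz, rfl⟩
      exact ⟨(Set.initialSegIic u).isMin_apply_iff.mpr hz, z.2⟩
  rw [hdim, himage, Set.ncard_image_of_injective _ Subtype.val_injective]

lemma ncard_conditionedSet (h : IsLRVine rk) {u : P} (hu : ¬ IsMin u) :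
    (conditionedSet u).ncard = 2 := by
  obtain ⟨a, b, hab, hcov⟩ := h.1.exists_covBy_iff hu
  have hau : rk u = rk a + 1 := h.1.rk_covBy a u ((hcov a).2 (Or.inl rfl))
  have hbu : rk u = rk b + 1 := h.1.rk_covBy b u ((hcov b).2 (Or.inr rfl))
  have hincl := Set.ncard_inter_add_ncard_union (completeUnion a) (completeUnion b)
  rw [← completeUnion_eq_union hu hcov, h.ncard_completeUnion, h.ncard_completeUnion,
    h.ncard_completeUnion] at hincl
  have hdiff : conditionedSet u =
      (completeUnion a ∪ completeUnion b) \ (completeUnion a ∩ completeUnion b) :=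
    (conditionedSet_eq_symmDiff hab hcov).trans (symmDiff_eq_sup_sdiff_inf _ _)
  rw [hdiff, Set.ncard_sdiff (Set.inter_subset_left.trans Set.subset_union_left),
    ← completeUnion_eq_union hu hcov, h.ncard_completeUnion]
  have := h.1.one_le_rk a
  omega

lemma eq_of_conditionedSet_subset (h : IsLRVine rk) {u y : P} (hu : ¬ IsMin u) (hyu : y ≤ u)
    (hC : conditionedSet u ⊆ completeUnion y) : y = u := by
  by_contra hne
  obtain ⟨c, hyc, hcu⟩ := exists_le_covBy_of_lt (hyu.lt_of_ne hne)
  have hsub : completeUnion u ⊆ completeUnion c := by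
    have := h.1.completeUnion_subset_union_conditionedSet hu hcu
    rwa [Set.union_eq_left.mpr (hC.trans (completeUnion_mono hyc))] at this
  have hle := Set.ncard_le_ncard hsub
  rw [h.ncard_completeUnion, h.ncard_completeUnion, h.1.rk_covBy c u hcu] at hle
  omega

lemma reachable_coverGraphBelow (h : IsLRVine rk) {w x y : P} (hxw : x ≤ w) (hyw : y ≤ w)
    (hrk : rk x = rk y) : (coverGraphBelow rk (rk x) w).Reachable x y := by
  have hconn := (h.2 w).tree (rk x) (h.1.one_le_rk x)
    (by rw [vineRank_subtype_le_eq h.1.strictMono.monotone]; exact h.1.strictMono.monotone hxw)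
  let f : (coverGraph (fun z : {z : P // z ≤ w} => rk z.val) (rk x)).induce
      {z | rk z.val = rk x} →g coverGraphBelow rk (rk x) w :=
    { toFun := fun z => z.1.1
      map_rel' := by
        rintro a b ⟨hne, ha, hb, p, hap, hbp⟩
        exact ⟨fun e => hne (Subtype.ext e), ha, hb, p, p.2,
          (Set.initialSegIic w).apply_covBy_apply_iff.mpr hap,
          (Set.initialSegIic w).apply_covBy_apply_iff.mpr hbp⟩ }
  exact (hconn.preconnected ⟨⟨x, hxw⟩, rfl⟩ ⟨⟨y, hyw⟩, hrk.symm⟩).map f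

/-- The paths from `x` to `y` inside the ideals of `u` and of `v` are the same path of the
rank-`rk x` forest, so the cover of its first edge lies below both `u` and `v`. -/
lemma exists_covBy_le_le_of_ne (h : IsLRVine rk) {u v x y : P} (hxy : x ≠ y)
    (hrk : rk x = rk y) (hxu : x ≤ u) (hyu : y ≤ u) (hxv : x ≤ v) (hyv : y ≤ v) :
    ∃ p, x ⋖ p ∧ p ≤ u ∧ p ≤ v := by
  obtain ⟨pu, hpu⟩ := (h.reachable_coverGraphBelow hxu hyu hrk).exists_isPath
  obtain ⟨pv, hpv⟩ := (h.reachable_coverGraphBelow hxv hyv hrk).exists_isPath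
  have hsame : pu.mapLe (coverGraphBelow_le _ _ _) = pv.mapLe (coverGraphBelow_le _ _ _) :=
    have := (h.1.forest (rk x)).subsingleton_path x y
    congrArg Subtype.val <| Subsingleton.elim
      ⟨_, hpu.mapLe (coverGraphBelow_le _ _ _)⟩ ⟨_, hpv.mapLe (coverGraphBelow_le _ _ _)⟩
  have hsnd : pu.snd = pv.snd := by
    simpa only [Walk.getVert_map, Hom.ofLE_apply] using congrArg (·.snd) hsame
  obtain ⟨-, -, hrk', p, hpu, hxp, hmp⟩ := pu.adj_snd (Walk.not_nil_of_ne hxy)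
  obtain ⟨hne, -, -, q, hqv, hxq, hmq⟩ := pv.adj_snd (Walk.not_nil_of_ne hxy)
  rw [← hsnd] at hne hmq
  have hpq : p = q := h.1.cover_unique x pu.snd hne hrk'.symm p q hxp hmp hxq hmq
  exact ⟨p, hxp, hpu, hpq ▸ hqv⟩

lemma exists_common_upper_bound (h : IsLRVine rk) {u v x y : P} (hrk : rk x = rk y)
    (hxu : x ≤ u) (hyu : y ≤ u) (hxv : x ≤ v) (hyv : y ≤ v) :
    ∃ w, x ≤ w ∧ y ≤ w ∧ w ≤ u ∧ w ≤ v := by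
  by_cases hxy : x = y
  · exact ⟨x, le_rfl, hxy ▸ le_rfl, hxu, hxv⟩
  obtain ⟨p, hxp, hpu, hpv⟩ := h.exists_covBy_le_le_of_ne hxy hrk hxu hyu hxv hyv
  obtain ⟨q, hyq, hqu, hqv⟩ := h.exists_covBy_le_le_of_ne (Ne.symm hxy) hrk.symm hyu hxu hyv hxv
  have hxp_rk : rk p = rk x + 1 := h.1.rk_covBy x p hxp
  have hpu_rk : rk p ≤ rk u := h.1.strictMono.monotone hpu
  obtain ⟨w, hpw, hqw, hwu, hwv⟩ := h.exists_common_upper_bound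
    (by rw [hxp_rk, h.1.rk_covBy y q hyq, hrk]) hpu hqu hpv hqv
  exact ⟨w, hxp.le.trans hpw, hyq.le.trans hqw, hwu, hwv⟩
termination_by rk u - rk x
decreasing_by omega

end IsLRVine

end

/-- Two non-minimal nodes of an LR-vine with equal conditioned sets are equal. -/
theorem conditionedSet_injective {P : Type*} [PartialOrder P] [Finite P]
    (rk : P → ℕ) (h : IsLRVine rk) (u v : P) (hu : ¬ IsMin u) (hv : ¬ IsMin v)
    (hC : conditionedSet u = conditionedSet v) : u = v := by
  obtain ⟨i, j, -, hCu⟩ := Set.ncard_eq_two.mp (h.ncard_conditionedSet hu)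
  have hi : i ∈ conditionedSet u := hCu ▸ Set.mem_insert i {j}
  have hj : j ∈ conditionedSet u := hCu ▸ Set.mem_insert_of_mem i rfl
  obtain ⟨w, hiw, hjw, hwu, hwv⟩ := h.exists_common_upper_bound
    (by rw [h.1.rk_min i hi.1, h.1.rk_min j hj.1])
    (le_of_mem_conditionedSet hi) (le_of_mem_conditionedSet hj)
    (le_of_mem_conditionedSet (hC ▸ hi)) (le_of_mem_conditionedSet (hC ▸ hj))
  have hCw : conditionedSet u ⊆ completeUnion w :=
    hCu ▸ Set.insert_subset ⟨hi.1, hiw⟩ (Set.singleton_subset_iff.mpr ⟨hj.1, hjw⟩)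
  exact (h.eq_of_conditionedSet_subset hu hwu hCw).symm.trans
    (h.eq_of_conditionedSet_subset hv hwv (hC ▸ hCw))
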